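/- arXiv:math-ph/9907014 — 5 statements merged into one kernel-verified Lean document; each statement's English description precedes it below -/
import Mathlib

section
/- For natural numbers A ≥ 1, N ≥ 1 and M, the number of strings a = ⟨a_1, …, a_N⟩ with entries a_i ∈ {0, …, A−1} and entry sum a_1 + ⋯ + a_N = M equals ∑_{n=0}^{⌊M/A⌋} (−1)^n · C(N, n) · C(N − 1 + M − nA, N − 1), where C denotes the binomial coefficient. -/
/-- The cyclic shift operator: `(shift a) i = a (i - 1 mod N)`. -/
def shift {A N : ℕ} (a : Fin N → Fin A) : Fin N → Fin A :=
  fun i => a ⟨((i : ℕ) + (N - 1)) % N, Nat.mod_lt _ i.pos⟩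

/-- The orbit of a string under iterated cyclic shifts. -/
def orbit {A N : ℕ} (a : Fin N → Fin A) : Set (Fin N → Fin A) :=
  {b | ∃ k : ℕ, shift^[k] a = b}

/-- The order of the cycle generated by `a`: the size of its shift orbit. -/
noncomputable def orbitSize {A N : ℕ} (a : Fin N → Fin A) : ℕ :=
  (orbit a).ncard

/-- The sum of the entries of a string. -/
def strSum {A N : ℕ} (a : Fin N → Fin A) : ℕ := ∑ i, (a i : ℕ)

/-- `|S(A,N,M)|`: the number of strings of length `N` over `{0,…,A-1}` with sum `M`. -/
noncomputable def Scard (A N M : ℕ) : ℕ :=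
  Set.ncard {a : Fin N → Fin A | strSum a = M}

/-- `M(A,N,M,n)`: the number of strings of length `N` over `{0,…,A-1}` with sum `M`
whose orbit has size exactly `n`. -/
noncomputable def Mcount (A N M n : ℕ) : ℕ :=
  Set.ncard {a : Fin N → Fin A | strSum a = M ∧ orbitSize a = n}

/-- `N(A,N,M,n)`: the number of cycles (shift orbits) of size exactly `n` among strings
of length `N` over `{0,…,A-1}` with sum `M`. -/
noncomputable def Ncount (A N M n : ℕ) : ℕ :=
  Set.ncard {o : Set (Fin N → Fin A) | ∃ a, strSum a = M ∧ orbitSize a = n ∧ o = orbit a}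

/-! Identify strings with tuples `f : Fin N → ℕ` of sum `M` whose entries are all `< A`, and run
inclusion–exclusion over the set `t` of entries forced to be `≥ A`. Subtracting `A` from the
entries in `t` is a bijection onto all tuples of sum `M - #t * A`, which stars and bars counts as
`C(N - 1 + M - #t * A, N - 1)`; only the `t` with `#t ≤ M / A` contribute. -/

open Finset

namespace Finset

variable {ι : Type*} [Fintype ι] [DecidableEq ι]

theorem mem_piAntidiag_univ {n : ℕ} {f : ι → ℕ} : f ∈ piAntidiag univ n ↔ ∑ i, f i = n := by
  simp

theorem card_piAntidiag_univ (n : ℕ) :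
    #(piAntidiag (univ : Finset ι) n) = (Fintype.card ι + n - 1).choose n := by
  rw [card_eq_of_equiv_fintype ((Equiv.subtypeEquivRight fun _ => mem_piAntidiag_univ).trans
    (Sym.equivNatSumOfFintype ι n).symm), Sym.card_sym_eq_choose]

theorem card_filter_le_piAntidiag_univ {n : ℕ} (c : ι → ℕ) :
    #{f ∈ piAntidiag univ n | ∀ i, c i ≤ f i} =
      if ∑ i, c i ≤ n then (Fintype.card ι + (n - ∑ i, c i) - 1).choose (n - ∑ i, c i) else 0 := by
  split_ifs with hc
  · rw [← card_piAntidiag_univ]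
    refine card_nbij' (· - c) (· + c) ?_ ?_ ?_ ?_
    · intro f hf
      simp only [coe_filter, mem_piAntidiag_univ, mem_coe] at hf ⊢
      rw [Pi.sub_def, sum_tsub_distrib _ fun i _ => hf.2 i, hf.1]
    · intro g hg
      simp only [coe_filter, mem_piAntidiag_univ, mem_coe] at hg ⊢
      refine ⟨?_, fun i => le_add_self⟩
      rw [Pi.add_def, sum_add_distrib, hg, tsub_add_cancel_of_le hc]
    · intro f hf
      exact tsub_add_cancel_of_le (mem_filter.1 hf).2
    · intro g _
      exact add_tsub_cancel_right g c
  · rw [card_eq_zero, filter_eq_empty_iff]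
    intro f hf hcf
    rw [mem_piAntidiag_univ] at hf
    exact hc (hf ▸ sum_le_sum fun i _ => hcf i)

theorem card_filter_forall_mem_le_piAntidiag_univ {n : ℕ} (A : ℕ) (t : Finset ι) :
    #{f ∈ piAntidiag univ n | ∀ i ∈ t, A ≤ f i} =
      if #t * A ≤ n then (Fintype.card ι + (n - #t * A) - 1).choose (n - #t * A) else 0 := by
  have hsum : ∑ i, (if i ∈ t then A else 0) = #t * A := by simp [sum_ite_mem]
  rw [← hsum, ← card_filter_le_piAntidiag_univ]
  congr 1
  refine filter_congr fun f _ => ⟨fun h i => ?_, fun h i hi => by simpa [hi] using h i⟩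
  split_ifs with hi
  exacts [h i hi, Nat.zero_le _]

theorem card_filter_forall_not_eq_sum {α : Type*} (s : Finset α) (p : ι → α → Prop)
    [∀ i, DecidablePred (p i)] :
    (#{x ∈ s | ∀ i, ¬ p i x} : ℤ) =
      ∑ t ∈ (univ : Finset ι).powerset, (-1 : ℤ) ^ #t * #{x ∈ s | ∀ i ∈ t, p i x} := by
  have indicator_eq : ∀ x, (if ∀ i, ¬ p i x then 1 else 0 : ℤ) =
      ∑ t ∈ (univ : Finset ι).powerset, (-1) ^ #t * if ∀ i ∈ t, p i x then 1 else 0 := by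
    intro x
    calc (if ∀ i, ¬ p i x then 1 else 0 : ℤ)
        = ∏ i, (1 - if p i x then 1 else 0) := by
          rw [← Fintype.prod_boole]
          exact Fintype.prod_congr _ _ fun i => by split_ifs <;> simp
      _ = _ := by simp [prod_sub, prod_boole]
  simp only [natCast_card_filter, indicator_eq, mul_sum]
  exact sum_comm

theorem card_filter_forall_lt_piAntidiag_univ (A n : ℕ) :
    (#{f ∈ piAntidiag (univ : Finset ι) n | ∀ i, f i < A} : ℤ) =
      ∑ j ∈ range (Fintype.card ι + 1), (-1) ^ j * (Fintype.card ι).choose j *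
        ((if j * A ≤ n then (Fintype.card ι + (n - j * A) - 1).choose (n - j * A) else 0 : ℕ) : ℤ) := by
  simp only [← not_le]
  rw [card_filter_forall_not_eq_sum]
  simp only [card_filter_forall_mem_le_piAntidiag_univ]
  rw [sum_powerset_apply_card (fun j => (-1 : ℤ) ^ j *
    ((if j * A ≤ n then (Fintype.card ι + (n - j * A) - 1).choose (n - j * A) else 0 : ℕ) : ℤ))]
  simp only [card_univ, nsmul_eq_mul]
  exact sum_congr rfl fun j _ => by ring

end Finset

theorem Scard_eq_card_filter_piAntidiag_univ (A N M : ℕ) :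
    Scard A N M = #{f ∈ piAntidiag (univ : Finset (Fin N)) M | ∀ i, f i < A} := by
  have himage : (fun a : Fin N → Fin A => Fin.val ∘ a) '' {a | strSum a = M} =
      ↑{f ∈ piAntidiag (univ : Finset (Fin N)) M | ∀ i, f i < A} := by
    ext f
    simp only [Set.mem_image, Set.mem_ofPred_eq, coe_filter, mem_piAntidiag_univ]
    constructor
    · rintro ⟨a, ha, rfl⟩
      exact ⟨ha, fun i => (a i).isLt⟩
    · rintro ⟨hf, hlt⟩
      exact ⟨fun i => ⟨f i, hlt i⟩, hf, rfl⟩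
  rw [Scard, ← Set.ncard_coe_finset, ← himage,
    Set.ncard_image_of_injective _ Fin.val_injective.comp_left]

/-- de Moivre's formula: the number of strings of length `N ≥ 1` over `{0,…,A-1}` (`A ≥ 1`)
with entry sum `M` equals `∑_{n=0}^{⌊M/A⌋} (-1)^n C(N,n) C(N-1+M-nA, N-1)`. -/
theorem stmt_0 (A N M : ℕ) (hA : 1 ≤ A) (hN : 1 ≤ N) :
    (Scard A N M : ℤ) =
      ∑ n ∈ Finset.range (M / A + 1),
        (-1 : ℤ) ^ n * (N.choose n : ℤ) * ((N - 1 + M - n * A).choose (N - 1) : ℤ) := by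
  rw [Scard_eq_card_filter_piAntidiag_univ]
  -- `convert` reconciles the `Fin`-specific decidability instance with the generic one
  convert card_filter_forall_lt_piAntidiag_univ (ι := Fin N) A M using 1
  · congr!
  rw [Fintype.card_fin]
  set term : ℕ → ℤ := fun n => (-1) ^ n * N.choose n *
    ((if n * A ≤ M then (N + (M - n * A) - 1).choose (M - n * A) else 0 : ℕ) : ℤ) with hterm
  have hterm_gt_N : ∀ n ≥ N + 1, term n = 0 := fun n hn => by
    simp [hterm, Nat.choose_eq_zero_of_lt hn]
  have hterm_gt_div : ∀ n ≥ M / A + 1, term n = 0 := fun n hn => by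
    have hnA : ¬ n * A ≤ M := fun h => absurd ((Nat.le_div_iff_mul_le hA).2 h) (by omega)
    simp [hterm, hnA]
  rw [← eventually_constant_sum hterm_gt_N (Nat.le_add_right _ (M / A + 1)),
    eventually_constant_sum hterm_gt_div (Nat.le_add_left _ _)]
  refine sum_congr rfl fun n hn => ?_
  have hnA : n * A ≤ M := (Nat.le_div_iff_mul_le hA).1 (Nat.lt_succ_iff.1 (mem_range.1 hn))
  simp only [hterm, if_pos hnA]
  rw [show N + (M - n * A) - 1 = N - 1 + (M - n * A) by omega,
    show N - 1 + M - n * A = N - 1 + (M - n * A) by omega, Nat.choose_symm_add]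
end

section
/- Let a be a string of length N ≥ 1 over the alphabet {0, …, A−1} with entry sum Σ(a) = M, and let n be the size of the orbit of a under the cyclic shift operator T. Then N divides M·n; equivalently, m := M·n/N is a natural number. -/
/-!
Let `O` be the orbit of `a`, of size `n`, and double count `∑_{b ∈ O} ∑_i b i`. Every string
of `O` has sum `M`, so this is `n * M`. On the other hand the shift permutes `O`, so the column
sum `∑_{b ∈ O} b i` does not depend on the position `i`, and the total is `N` times a column sum.
-/

open Finset

section Shift

variable {A N : ℕ}

theorem shift_apply_finRotate (a : Fin N → Fin A) (i : Fin N) :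
    shift a (finRotate N i) = a i := by
  obtain _ | N := N
  · exact i.elim0
  rw [shift, finRotate_apply]
  congr 1
  ext
  simp only [Fin.val_add, Fin.val_one', Nat.add_mod_mod, Nat.add_sub_cancel]
  rw [Nat.mod_add_mod, Nat.add_assoc, Nat.add_comm 1, Nat.add_mod_right, Nat.mod_eq_of_lt i.isLt]

theorem shift_injective : Function.Injective (shift : (Fin N → Fin A) → Fin N → Fin A) :=
  fun a b h => funext fun i => by
    rw [← shift_apply_finRotate a, ← shift_apply_finRotate b, h]

theorem strSum_shift (a : Fin N → Fin A) : strSum (shift a) = strSum a := by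
  rw [strSum, ← Equiv.sum_comp (finRotate N)]
  simp only [shift_apply_finRotate, strSum]

theorem shift_mem_orbit {a b : Fin N → Fin A} (hb : b ∈ orbit a) : shift b ∈ orbit a := by
  obtain ⟨k, rfl⟩ := hb
  exact ⟨k + 1, Function.iterate_succ_apply' shift k a⟩

theorem strSum_of_mem_orbit {a b : Fin N → Fin A} (hb : b ∈ orbit a) :
    strSum b = strSum a := by
  obtain ⟨k, rfl⟩ := hb
  induction k with
  | zero => rfl
  | succ k ih => rw [Function.iterate_succ_apply', strSum_shift, ih]

theorem image_shift_orbit (a : Fin N → Fin A) :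
    (orbit a).toFinite.toFinset.image shift = (orbit a).toFinite.toFinset := by
  refine eq_of_subset_of_card_le (fun b hb => ?_) (card_image_of_injective _ shift_injective).ge
  obtain ⟨c, hc, rfl⟩ := mem_image.1 hb
  simpa using shift_mem_orbit (by simpa using hc)

end Shift

theorem Fin.apply_eq_apply_zero_of_forall_apply_add_one {β : Type*} {n : ℕ}
    {f : Fin (n + 1) → β} (hf : ∀ i, f (i + 1) = f i) (i : Fin (n + 1)) : f i = f 0 := by
  induction i using Fin.induction with
  | zero => rfl
  | succ i ih => rw [← Fin.coeSucc_eq_succ, hf, ih]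

theorem sum_orbit_apply_eq_sum_orbit_apply_zero {A N : ℕ} (a : Fin (N + 1) → Fin A)
    (i : Fin (N + 1)) :
    ∑ b ∈ (orbit a).toFinite.toFinset, (b i : ℕ) =
      ∑ b ∈ (orbit a).toFinite.toFinset, (b 0 : ℕ) := by
  refine Fin.apply_eq_apply_zero_of_forall_apply_add_one
    (f := fun i => ∑ b ∈ (orbit a).toFinite.toFinset, (b i : ℕ)) (fun j => ?_) i
  conv_lhs => rw [← image_shift_orbit a, sum_image fun b _ c _ h => shift_injective h,
    ← finRotate_apply]
  simp only [shift_apply_finRotate]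

theorem stmt_3_general (A N M n : ℕ) (a : Fin N → Fin A)
    (hM : strSum a = M) (hn : orbitSize a = n) :
    N ∣ M * n := by
  obtain _ | N := N
  · simp [← hM, strSum]
  set O := (orbit a).toFinite.toFinset
  have hcard : #O = n := by rw [← hn, orbitSize, Set.ncard_eq_toFinset_card]
  have hrows : ∑ b ∈ O, strSum b = M * n := by
    rw [sum_congr rfl fun b hb => (strSum_of_mem_orbit (by simpa [O] using hb)).trans hM,
      sum_const, hcard, smul_eq_mul, mul_comm]
  have hcols : ∑ b ∈ O, strSum b = (N + 1) * ∑ b ∈ O, (b 0 : ℕ) := by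
    simp only [strSum]
    rw [sum_comm, sum_congr rfl fun i _ => sum_orbit_apply_eq_sum_orbit_apply_zero a i,
      sum_const, card_univ, Fintype.card_fin, smul_eq_mul]
  exact ⟨_, hrows ▸ hcols⟩

/-- If a string `a` of length `N ≥ 1` has entry sum `M` and orbit size `n`,
then `N` divides `M·n` (so `m := M·n/N` is a natural number). -/
theorem stmt_3 (A N M n : ℕ) (hN : 1 ≤ N) (a : Fin N → Fin A)
    (hM : strSum a = M) (hn : orbitSize a = n) :
    N ∣ M * n :=
  stmt_3_general A N M n a hM hn
end

section
/- For natural numbers A ≥ 1, N ≥ 1 and M, one has |S(A, N, M)| = ∑_{n ∈ D(A,N,M)} M(A, N, M, n), i.e. the number of strings of length N over {0, …, A−1} with sum M equals the sum over all n dividing N with N | M·n of the number of such strings whose cyclic-shift orbit has size exactly n. -/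
/-!
The orbit of a string `a` has as many elements as the minimal period `d` of `a` under the
shift, and `d ∣ N` because the `N`-th iterate of the shift is the identity. Since `a` is
`d`-periodic, all windows of `d` consecutive entries have the same sum `s`; summing the windows
starting at each of the `N` positions counts every entry `d` times, so `d · Σ(a) = N · s` and
`N ∣ Σ(a) · d`. Hence every string of sum `M` has orbit size in `D(A, N, M)`, and sorting the
strings by orbit size gives the identity.
-/

open Function Finset Fin.NatCast

theorem Function.ncard_setOf_exists_iterate_eq {α : Type*} {f : α → α} {x : α}
    (hx : x ∈ periodicPts f) :
    {y | ∃ k, f^[k] x = y}.ncard = minimalPeriod f x := by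
  have hrange : {y | ∃ k, f^[k] x = y} = (f^[·] x) '' ↑(range (minimalPeriod f x)) := by
    ext y
    refine ⟨fun ⟨k, hk⟩ => ⟨k % minimalPeriod f x, ?_, ?_⟩, fun ⟨k, _, hk⟩ => ⟨k, hk⟩⟩
    · simpa using Nat.mod_lt k (minimalPeriod_pos_of_mem_periodicPts hx)
    · simpa [iterate_mod_minimalPeriod_eq] using hk
  rw [hrange, Set.InjOn.ncard_image, Set.ncard_coe_finset, card_range]
  simpa using iterate_injOn_Iio_minimalPeriod

theorem Fin.nsmul_sum_eq_nsmul_sum_range_of_periodic {N : ℕ} [NeZero N] {M : Type*}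
    [AddCancelCommMonoid M] (a : Fin N → M) (d : ℕ) (ha : ∀ i : Fin N, a (i + d) = a i) :
    d • ∑ i, a i = N • ∑ k ∈ range d, a (k : Fin N) := by
  set window : Fin N → M := fun i => ∑ k ∈ range d, a (i + (k : Fin N))
  have window_succ (i : Fin N) : window (i + 1) = window i := by
    have h := sum_range_succ (fun k : ℕ => a (i + (k : Fin N))) d
    rw [sum_range_succ', ha, Nat.cast_zero, add_zero] at h
    refine add_right_cancel (b := a i) (Eq.trans ?_ h)
    simp only [window, Nat.cast_add_one, add_assoc, add_comm (1 : Fin N)]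
  have window_const (i : Fin N) : window i = window 0 := by
    rw [← Fin.cast_val_eq_self i]
    induction (i : ℕ) with
    | zero => rfl
    | succ n ih => rw [Nat.cast_add_one, window_succ, ih]
  have sum_comp_add (k : ℕ) : ∑ i, a (i + k) = ∑ i, a i :=
    Equiv.sum_comp (Equiv.addRight (k : Fin N)) a
  calc d • ∑ i, a i = ∑ k ∈ range d, ∑ i, a (i + (k : Fin N)) := by
        simp only [sum_comp_add, Finset.sum_const, card_range]
    _ = ∑ i, window i := sum_comm
    _ = N • window 0 := by simp only [window_const, Fin.sum_const]
    _ = N • ∑ k ∈ range d, a (k : Fin N) := by simp only [window, zero_add]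

section Shift

variable {A N : ℕ} [NeZero N]

theorem shift_apply (a : Fin N → Fin A) (i : Fin N) : shift a i = a (i - 1) := by
  unfold shift
  congr 1
  ext
  rw [Fin.val_mk, Fin.val_sub, Fin.val_one']
  rcases (Nat.one_le_iff_ne_zero.mpr (NeZero.ne N)).eq_or_lt with h | h
  · simp [← h]
  · rw [Nat.mod_eq_of_lt h, add_comm]

theorem shift_iterate_apply (a : Fin N → Fin A) (k : ℕ) (i : Fin N) :
    shift^[k] a i = a (i - (k : Fin N)) := by
  induction k generalizing i with
  | zero => simp
  | succ k ih =>
    rw [iterate_succ_apply', shift_apply, ih, Nat.cast_succ, sub_sub, add_comm (1 : Fin N)]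

theorem isPeriodicPt_shift (a : Fin N → Fin A) : IsPeriodicPt shift N a := by
  funext i
  simp [shift_iterate_apply]

theorem orbitSize_eq_minimalPeriod (a : Fin N → Fin A) : orbitSize a = minimalPeriod shift a :=
  ncard_setOf_exists_iterate_eq <| mk_mem_periodicPts (NeZero.pos N) (isPeriodicPt_shift a)

theorem orbitSize_dvd (a : Fin N → Fin A) : orbitSize a ∣ N :=
  orbitSize_eq_minimalPeriod a ▸ (isPeriodicPt_shift a).minimalPeriod_dvd

theorem dvd_strSum_mul_orbitSize (a : Fin N → Fin A) : N ∣ strSum a * orbitSize a := by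
  have periodic (i : Fin N) : a (i + (orbitSize a : Fin N)) = a i := by
    have h := congrFun (iterate_minimalPeriod (f := shift) (x := a)) (i + orbitSize a)
    rwa [shift_iterate_apply, ← orbitSize_eq_minimalPeriod, add_sub_cancel_right, eq_comm] at h
  have h := Fin.nsmul_sum_eq_nsmul_sum_range_of_periodic (fun i => (a i : ℕ)) _
    fun i => congrArg Fin.val (periodic i)
  rw [smul_eq_mul, smul_eq_mul] at h
  exact ⟨_, by rw [strSum, mul_comm, h]⟩

end Shift

theorem stmt_6_general (A N M : ℕ) (hN : 1 ≤ N) :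
    Scard A N M =
      ∑ n ∈ N.divisors.filter (fun n => N ∣ M * n), Mcount A N M n := by
  have : NeZero N := ⟨Nat.one_le_iff_ne_zero.mp hN⟩
  classical
  have orbitSize_mem : Set.MapsTo orbitSize
      (({a | strSum a = M} : Finset (Fin N → Fin A)) : Set (Fin N → Fin A))
      (N.divisors.filter fun n => N ∣ M * n) := by
    intro a ha
    simp only [coe_filter, mem_univ, true_and, Nat.mem_divisors] at ha ⊢
    exact ⟨⟨orbitSize_dvd a, NeZero.ne N⟩, ha ▸ dvd_strSum_mul_orbitSize a⟩
  rw [Scard, ← coe_filter_univ, Set.ncard_coe_finset, card_eq_sum_card_fiberwise orbitSize_mem]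
  refine sum_congr rfl fun n _ => ?_
  rw [Mcount, ← Set.ncard_coe_finset, filter_filter, coe_filter_univ]

/-- `|S(A,N,M)| = ∑_{n ∈ D(A,N,M)} M(A,N,M,n)`: the number of strings of length `N ≥ 1`
over `{0,…,A-1}` (`A ≥ 1`) with sum `M` equals the sum, over all `n` with `n ∣ N` and
`N ∣ M·n`, of the number of such strings whose orbit has size exactly `n`. -/
theorem stmt_6 (A N M : ℕ) (hA : 1 ≤ A) (hN : 1 ≤ N) :
    Scard A N M =
      ∑ n ∈ N.divisors.filter (fun n => N ∣ M * n), Mcount A N M n :=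
  stmt_6_general A N M hN
end

section
/- If K is a squarefree natural number that is the product of ν distinct primes (ν ≥ 0), then Δ_K = (−1)^ν, where Δ_K is the number of even-length ordered factorizations of K into factors ≥ 2 minus the number of odd-length such factorizations. -/
/-!
Splitting off the first factor shows that `Δ` satisfies `∑_{d ∣ n} Δ_d = [n = 1]`, i.e.
`ζ * Δ = 1` in the ring of arithmetic functions. Hence `Δ` is the Möbius function, which is
`(-1)^ν` on a product of `ν` distinct primes.
-/

/-- `L` is an ordered factorization of `K` into factors `≥ 2`. -/
def IsOrderedFactorization (K : ℕ) (L : List ℕ) : Prop :=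
  (∀ x ∈ L, 2 ≤ x) ∧ L.prod = K

/-- `Δ_K`: the number of even-length ordered factorizations of `K` into factors `≥ 2`
minus the number of odd-length such factorizations. -/
noncomputable def Delta (K : ℕ) : ℤ :=
  (Set.ncard {L : List ℕ | IsOrderedFactorization K L ∧ Even L.length} : ℤ) -
  (Set.ncard {L : List ℕ | IsOrderedFactorization K L ∧ Odd L.length} : ℤ)

open ArithmeticFunction
open scoped ArithmeticFunction.Moebius ArithmeticFunction.zeta

theorem isOrderedFactorization_nil {n : ℕ} : IsOrderedFactorization n [] ↔ n = 1 := by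
  simp [IsOrderedFactorization, eq_comm]

theorem isOrderedFactorization_cons {n a : ℕ} {L : List ℕ} :
    IsOrderedFactorization n (a :: L) ↔
      2 ≤ a ∧ a ∣ n ∧ IsOrderedFactorization (n / a) L := by
  simp only [IsOrderedFactorization, List.mem_cons, forall_eq_or_imp, List.prod_cons]
  constructor
  · rintro ⟨⟨ha, hL⟩, rfl⟩
    exact ⟨ha, dvd_mul_right a _, hL, (Nat.mul_div_cancel_left _ (by omega)).symm⟩
  · rintro ⟨ha, ⟨k, rfl⟩, hL, hk⟩
    rw [Nat.mul_div_cancel_left _ (by omega)] at hk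
    exact ⟨⟨ha, hL⟩, hk ▸ rfl⟩

theorem IsOrderedFactorization.ne_zero {n : ℕ} {L : List ℕ} (h : IsOrderedFactorization n L) :
    n ≠ 0 := by
  rw [← h.2]
  exact (List.prod_pos fun x hx => by have := h.1 x hx; omega).ne'

theorem mem_divisors_erase_one {n d : ℕ} :
    d ∈ n.divisors.erase 1 ↔ 2 ≤ d ∧ d ∣ n ∧ n ≠ 0 := by
  rw [Finset.mem_erase, Nat.mem_divisors]
  constructor
  · rintro ⟨hd1, hdn, hn⟩
    have := Nat.pos_of_dvd_of_pos hdn (Nat.pos_of_ne_zero hn)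
    exact ⟨by omega, hdn, hn⟩
  · rintro ⟨hd, hdn, hn⟩
    exact ⟨by omega, hdn, hn⟩

def orderedFactorizations (n : ℕ) : Finset (List ℕ) :=
  if n = 1 then {[]} else
    (n.divisors.erase 1).attach.biUnion fun d =>
      (orderedFactorizations (n / d)).image (d.1 :: ·)
termination_by n
decreasing_by
  obtain ⟨hd, -, hn⟩ := mem_divisors_erase_one.1 d.2
  exact Nat.div_lt_self (by omega) (by omega)

theorem mem_orderedFactorizations {n : ℕ} {L : List ℕ} :
    L ∈ orderedFactorizations n ↔ IsOrderedFactorization n L := by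
  induction L generalizing n with
  | nil =>
    rw [orderedFactorizations, isOrderedFactorization_nil]
    split_ifs with hn <;> simp [hn]
  | cons a M ih =>
    rw [orderedFactorizations, isOrderedFactorization_cons]
    split_ifs with hn
    · subst hn
      simp only [Finset.mem_singleton, reduceCtorEq, false_iff, Nat.dvd_one]
      omega
    · simp only [Finset.mem_biUnion, Finset.mem_attach, true_and, Finset.mem_image,
        List.cons.injEq, Subtype.exists, mem_divisors_erase_one]
      constructor
      · rintro ⟨d, ⟨hd, hdn, -⟩, M', hM', rfl, rfl⟩
        exact ⟨hd, hdn, ih.1 hM'⟩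
      · rintro ⟨ha, han, hM⟩
        exact ⟨a, ⟨ha, han, fun h => hM.ne_zero (by simp [h])⟩, M, ih.2 hM, rfl, rfl⟩

theorem delta_eq_sum_neg_one_pow_length (n : ℕ) :
    Delta n = ∑ L ∈ orderedFactorizations n, (-1 : ℤ) ^ L.length := by
  have hcoe : ∀ p : ℕ → Prop, [DecidablePred p] →
      {L | IsOrderedFactorization n L ∧ p L.length} =
        ↑((orderedFactorizations n).filter fun L => p L.length) := fun p _ => by
    ext L; simp [mem_orderedFactorizations]
  simp only [Delta, hcoe, Set.ncard_coe_finset, neg_one_pow_eq_ite, Finset.sum_ite,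
    Finset.sum_const, nsmul_eq_mul, mul_one, mul_neg, Nat.not_even_iff_odd]
  ring

theorem delta_eq_neg_sum {n : ℕ} (hn : n ≠ 1) :
    Delta n = -∑ d ∈ n.divisors.erase 1, Delta (n / d) := by
  rw [delta_eq_sum_neg_one_pow_length, orderedFactorizations, if_neg hn, Finset.sum_biUnion,
    ← Finset.sum_attach _ fun d => Delta (n / d), ← Finset.sum_neg_distrib]
  · refine Finset.sum_congr rfl fun d _ => ?_
    rw [Finset.sum_image fun _ _ _ _ h => List.cons_injective h, delta_eq_sum_neg_one_pow_length,
      ← Finset.sum_neg_distrib]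
    simp [pow_succ]
  · intro d _ e _ hde
    simp only [Function.onFun, Finset.disjoint_left, Finset.mem_image]
    rintro L ⟨M, -, rfl⟩ ⟨M', -, h⟩
    exact hde (Subtype.ext (List.cons_eq_cons.1 h).1.symm)

theorem delta_one : Delta 1 = 1 := by
  simp [delta_eq_sum_neg_one_pow_length, orderedFactorizations]

theorem delta_zero : Delta 0 = 0 := by
  rw [delta_eq_neg_sum zero_ne_one]
  simp

theorem sum_divisors_delta (n : ℕ) : ∑ d ∈ n.divisors, Delta d = if n = 1 then 1 else 0 := by
  split_ifs with hn
  · simp [hn, delta_one]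
  rcases eq_or_ne n 0 with rfl | hn0
  · simp
  rw [← Nat.sum_div_divisors, ← Finset.add_sum_erase _ _ (Nat.one_mem_divisors.2 hn0),
    Nat.div_one, delta_eq_neg_sum hn, neg_add_cancel]

noncomputable def deltaArithmeticFunction : ArithmeticFunction ℤ := ⟨Delta, delta_zero⟩

theorem coe_zeta_mul_deltaArithmeticFunction :
    (ζ : ArithmeticFunction ℤ) * deltaArithmeticFunction = 1 := by
  ext n
  rw [coe_zeta_mul_apply, one_apply]
  exact sum_divisors_delta n

theorem delta_eq_moebius (n : ℕ) : Delta n = μ n :=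
  DFunLike.congr_fun
    (left_inv_eq_right_inv moebius_mul_coe_zeta coe_zeta_mul_deltaArithmeticFunction).symm n

theorem moebius_apply_prod_primes {s : Finset ℕ} (hs : ∀ p ∈ s, p.Prime) :
    μ (∏ p ∈ s, p) = (-1) ^ s.card := by
  rw [isMultiplicative_moebius.map_prod_of_prime s hs,
    Finset.prod_congr rfl fun p hp => moebius_apply_prime (hs p hp), Finset.prod_const]

/-- If `K` is the product of `ν` distinct primes (`ν ≥ 0`), then `Δ_K = (-1)^ν`. -/
theorem stmt_8 (K ν : ℕ) (P : Finset ℕ) (hP : ∀ p ∈ P, p.Prime)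
    (hK : K = ∏ p ∈ P, p) (hν : ν = P.card) :
    Delta K = (-1 : ℤ) ^ ν := by
  rw [hK, hν, delta_eq_moebius, moebius_apply_prod_primes hP]
end

section
/- For all natural numbers A ≥ 1 and n ≥ 1, the integer n divides ∑_{k | n} μ(n/k) · A^k, where μ is the Möbius function and the sum runs over the divisors k of n. (For n prime this specializes to Fermat's little theorem, n | A^n − A.) -/
/-!
It suffices to show that `p ^ e` divides the sum whenever `n = p ^ e * m` with `p` prime,
`p ∤ m` and `e ≥ 1`. Since `μ` vanishes off squarefree numbers, the divisors `d` of `n` with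
`μ d ≠ 0` come in pairs `d, p * d` with `d ∣ m`, so the Möbius sum `∑_{d ∣ n} μ(d) A^(n/d)`
becomes `∑_{d ∣ m} μ(d) (A^(p^e (m/d)) - A^(p^(e-1) (m/d)))`. Each bracket is divisible by
`p ^ e`: this is Fermat's little theorem lifted along `p`-power exponents.
-/

open ArithmeticFunction Finset
open scoped ArithmeticFunction.Moebius

theorem Nat.Coprime.sum_divisors_mul_eq_sum_sum {M : Type*} [AddCommMonoid M] {m n : ℕ}
    (hmn : m.Coprime n) (f : ℕ → M) :
    ∑ d ∈ (m * n).divisors, f d = ∑ i ∈ m.divisors, ∑ j ∈ n.divisors, f (i * j) := by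
  rw [hmn.divisors_mul, sum_map, ← sum_product' (f := fun i j => f (i * j))]
  exact sum_attach (m.divisors ×ˢ n.divisors) fun x => f (x.1 * x.2)

theorem sum_divisors_prime_pow_mul_moebius_mul {R : Type*} [CommRing R] (g : ℕ → R)
    {p m e : ℕ} (hp : p.Prime) (hpm : ¬ p ∣ m) (he : e ≠ 0) :
    ∑ d ∈ (p ^ e * m).divisors, (μ d : R) * g d =
      ∑ d ∈ m.divisors, (μ d : R) * (g d - g (p * d)) := by
  obtain ⟨k, rfl⟩ := Nat.exists_eq_add_one_of_ne_zero he
  have hcop : (p ^ (k + 1)).Coprime m := .pow_left _ (hp.coprime_iff_not_dvd.2 hpm)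
  rw [hcop.sum_divisors_mul_eq_sum_sum, Nat.sum_divisors_prime_pow hp, sum_range_succ',
    sum_range_succ', sum_eq_zero, zero_add, ← sum_add_distrib]
  · refine sum_congr rfl fun d hd => ?_
    have hpd : p.Coprime d :=
      hp.coprime_iff_not_dvd.2 fun h => hpm (h.trans (Nat.dvd_of_mem_divisors hd))
    rw [zero_add, pow_one, pow_zero, one_mul,
      isMultiplicative_moebius.map_mul_of_coprime hpd, moebius_apply_prime hp]
    push_cast
    ring
  · intro i _
    refine sum_eq_zero fun d _ => ?_
    rw [moebius_eq_zero_of_not_squarefree, Int.cast_zero, zero_mul]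
    refine fun hsq => hp.ne_one (Nat.isUnit_iff.1 (hsq p ?_))
    exact (pow_two p ▸ pow_dvd_pow p (by omega : 2 ≤ i + 1 + 1)).mul_right d

theorem prime_pow_dvd_pow_sub_pow (a : ℤ) {p : ℕ} (hp : p.Prime) (k m : ℕ) :
    (p : ℤ) ^ (k + 1) ∣ a ^ (p ^ (k + 1) * m) - a ^ (p ^ k * m) := by
  have hfermat : (p : ℤ) ∣ (a ^ m) ^ p - a ^ m := by
    have : Fact p.Prime := ⟨hp⟩
    rw [← ZMod.intCast_zmod_eq_zero_iff_dvd]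
    push_cast
    rw [ZMod.pow_card, sub_self]
  simpa only [← pow_mul, pow_succ, mul_comm, mul_left_comm, mul_assoc]
    using dvd_sub_pow_of_dvd_sub hfermat k

theorem prime_pow_dvd_sum_divisors_moebius_mul_pow (a : ℤ) {p m : ℕ} (hp : p.Prime)
    (hpm : ¬ p ∣ m) (e : ℕ) :
    (p : ℤ) ^ e ∣ ∑ d ∈ (p ^ e * m).divisors, (μ d : ℤ) * a ^ (p ^ e * m / d) := by
  rcases e with _ | k
  · exact pow_zero (p : ℤ) ▸ one_dvd _
  have hpairs := sum_divisors_prime_pow_mul_moebius_mul (fun d => a ^ (p ^ (k + 1) * m / d))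
    hp hpm k.succ_ne_zero
  simp only [Int.cast_id] at hpairs
  rw [hpairs]
  refine dvd_sum fun d hd => dvd_mul_of_dvd_right ?_ _
  have hdm : d ∣ m := Nat.dvd_of_mem_divisors hd
  have hpd : p ^ (k + 1) * m / (p * d) = p ^ k * (m / d) := by
    rw [pow_succ', mul_assoc, Nat.mul_div_mul_left _ _ hp.pos, Nat.mul_div_assoc _ hdm]
  rw [hpd, Nat.mul_div_assoc _ hdm]
  exact prime_pow_dvd_pow_sub_pow a hp k (m / d)

theorem stmt_15_general (A n : ℕ) :
    (n : ℤ) ∣ ∑ k ∈ n.divisors, ArithmeticFunction.moebius (n / k) * (A : ℤ) ^ k := by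
  rcases eq_or_ne n 0 with rfl | hn
  · simp
  rw [← Nat.sum_div_divisors, Int.natCast_dvd, Nat.dvd_iff_prime_pow_dvd_dvd]
  intro p k hp hpk
  obtain ⟨e, m, hpm, hke, rfl⟩ : ∃ e m, ¬ p ∣ m ∧ k ≤ e ∧ n = p ^ e * m :=
    ⟨_, _, hp.coprime_iff_not_dvd.1 (Nat.coprime_ordCompl hp hn),
      (hp.pow_dvd_iff_le_factorization hn).1 hpk, (Nat.ordProj_mul_ordCompl_eq_self n p).symm⟩
  refine (pow_dvd_pow p hke).trans (Int.natCast_dvd.1 ?_)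
  push_cast
  convert prime_pow_dvd_sum_divisors_moebius_mul_pow (A : ℤ) hp hpm e using 3 with d hd
  rw [Nat.div_div_self (Nat.dvd_of_mem_divisors hd) hn]

/-- Generalized Fermat: for all `A ≥ 1` and `n ≥ 1`, `n` divides `∑_{k ∣ n} μ(n/k)·A^k`,
where `μ` is the Möbius function. (For `n` prime this is `n ∣ A^n - A`.) -/
theorem stmt_15 (A n : ℕ) (hA : 1 ≤ A) (hn : 1 ≤ n) :
    (n : ℤ) ∣ ∑ k ∈ n.divisors, ArithmeticFunction.moebius (n / k) * (A : ℤ) ^ k :=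
  stmt_15_general A n
end
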